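/- arXiv:1803.09287 — 10 statements merged into one kernel-verified Lean document; each statement's English description precedes it below -/
import Mathlib

section
/- Let T : V → g be an O-operator on a Lie algebra g with respect to a representation (V;ρ). Then the product u ·_T v := ρ(Tu)v defines a pre-Lie algebra structure on V, i.e. (u·_T v)·_T w − u·_T(v·_T w) is symmetric in u and v. -/
attribute [local instance] LieRing.ofAssociativeRing

/-- An O-operator induces a pre-Lie product `u ·_T v := ρ(Tu)v` on `V`:
the associator is symmetric in the first two arguments. -/
theorem stmt1 {K : Type*} [Field K]
    {g : Type*} [LieRing g] [LieAlgebra K g]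
    {V : Type*} [AddCommGroup V] [Module K V]
    (ρ : g →ₗ⁅K⁆ Module.End K V) (T : V →ₗ[K] g)
    (hT : ∀ u v : V, ⁅T u, T v⁆ = T (ρ (T u) v - ρ (T v) u)) :
    ∀ u v w : V,
      ρ (T (ρ (T u) v)) w - ρ (T u) (ρ (T v) w)
        = ρ (T (ρ (T v) u)) w - ρ (T v) (ρ (T u) w) := by
  intro u v w
  -- Since ρ is a Lie hom, `ρ` of the O-operator identity is `[ρ(Tu), ρ(Tv)] = ρ(T(u·v - v·u))`,
  -- which rearranges to the claim.
  have h := congr(ρ $(hT u v) w)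
  simp only [LieHom.map_lie, LieRing.of_associative_ring_bracket, map_sub, LinearMap.sub_apply,
    Module.End.mul_apply] at h
  rw [sub_eq_sub_iff_sub_eq_sub, h]
end

section
/- Let T : V → g be an O-operator on a Lie algebra g with respect to a representation (V;ρ). Then the map ρ̄ : V → gl(g) defined by ρ̄(u)(x) := [Tu, x] + T(ρ(x)u) is a representation of the Lie algebra (V, [·,·]_T) on g, where [u,v]_T = ρ(Tu)v − ρ(Tv)u. -/
attribute [local instance 100] LieRing.ofAssociativeRing

/-! Jacobi's identity takes care of the `[Tu, ·]` part of `ρ̄`. In the remaining terms the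
O-operator identity turns `[Tu, T(ρ(x)v)] + T(ρ(T(ρ(x)v))u)` into `T(ρ(Tu)ρ(x)v)`, and what is left
under `T` is an identity in `V` that only uses that `ρ` is a representation. -/

section OOperator

variable {K : Type*} [CommRing K] {g : Type*} [LieRing g] [LieAlgebra K g]
  {V : Type*} [AddCommGroup V] [Module K V]

def IsOOperator (ρ : g →ₗ⁅K⁆ Module.End K V) (T : V →ₗ[K] g) : Prop :=
  ∀ u v : V, ⁅T u, T v⁆ = T (ρ (T u) v - ρ (T v) u)

theorem LieHom.map_lie_apply (ρ : g →ₗ⁅K⁆ Module.End K V) (y z : g) (w : V) :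
    ρ ⁅y, z⁆ w = ρ y (ρ z w) - ρ z (ρ y w) := by
  rw [ρ.map_lie, Ring.lie_def]
  rfl

theorem LieHom.map_apply_sub_map_apply (ρ : g →ₗ⁅K⁆ Module.End K V) (a b x : g) (u v : V) :
    ρ x (ρ a v - ρ b u) = ρ a (ρ x v) + ρ ⁅b, x⁆ u - (ρ b (ρ x u) + ρ ⁅a, x⁆ v) := by
  simp only [ρ.map_lie_apply, map_sub]
  abel

theorem IsOOperator.lie_add_map_apply {ρ : g →ₗ⁅K⁆ Module.End K V} {T : V →ₗ[K] g}
    (hT : IsOOperator ρ T) (u w : V) :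
    ⁅T u, T w⁆ + T (ρ (T w) u) = T (ρ (T u) w) := by
  rw [hT, ← map_add, sub_add_cancel]

end OOperator

/-- Given an O-operator `T`, the map `ρ̄(u)x := [Tu,x] + T(ρ(x)u)` is a
representation of the Lie algebra `(V,[·,·]_T)` on `g`. -/
theorem stmt2 {K : Type*} [Field K]
    {g : Type*} [LieRing g] [LieAlgebra K g]
    {V : Type*} [AddCommGroup V] [Module K V]
    (ρ : g →ₗ⁅K⁆ Module.End K V) (T : V →ₗ[K] g)
    (hT : ∀ u v : V, ⁅T u, T v⁆ = T (ρ (T u) v - ρ (T v) u)) :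
    ∀ u v : V, ∀ x : g,
      (⁅T (ρ (T u) v - ρ (T v) u), x⁆ + T (ρ x (ρ (T u) v - ρ (T v) u)))
        = (⁅T u, ⁅T v, x⁆ + T (ρ x v)⁆ + T (ρ (⁅T v, x⁆ + T (ρ x v)) u))
          - (⁅T v, ⁅T u, x⁆ + T (ρ x u)⁆ + T (ρ (⁅T u, x⁆ + T (ρ x u)) v)) := by
  intro u v x
  have hO : IsOOperator ρ T := hT
  have hTu := hO.lie_add_map_apply u (ρ x v)
  have hTv := hO.lie_add_map_apply v (ρ x u)
  rw [← hT u v, lie_lie, ρ.map_apply_sub_map_apply]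
  simp only [lie_add, map_add, LinearMap.add_apply, map_sub]
  rw [← hTu, ← hTv]
  abel
end

section
/- Let T be an O-operator on a Lie algebra g with respect to a representation (V;ρ) and let T + tŤ be a one-parameter infinitesimal deformation of T for all scalars t (i.e. T + tŤ is an O-operator for every t). Then Ť is an O-operator, and Ť is a 1-cocycle: for all u,v ∈ V, [Tu, Ťv] − [Tv, Ťu] − T(ρ(Ťu)v − ρ(Ťv)u) − Ť(ρ(Tu)v − ρ(Tv)u) = 0. -/
/-!
Expanding the O-operator condition for `T + t • Ť` in `t` gives a polynomial identity
`D_T + t • C + t² • D_Ť = 0`, where `D_S` is the O-operator defect of `S` and `C` is the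
1-cocycle expression. Evaluating at `t = 0, 1, -1` separates the coefficients, using `2 ≠ 0`.
-/

attribute [local instance] LieRing.ofAssociativeRing

section Defect

variable {R : Type*} [CommRing R] {g : Type*} [LieRing g] [LieAlgebra R g]
  {V : Type*} [AddCommGroup V] [Module R V] (ρ : g →ₗ⁅R⁆ Module.End R V)

/-- `S` is an O-operator iff its defect vanishes identically. -/
def oOperatorDefect (S : V →ₗ[R] g) (u v : V) : g :=
  ⁅S u, S v⁆ - S (ρ (S u) v - ρ (S v) u)

/-- The left-hand side of the 1-cocycle condition for `S` relative to the O-operator `T`. -/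
def oOperatorCocycleDefect (T S : V →ₗ[R] g) (u v : V) : g :=
  ⁅T u, S v⁆ - ⁅T v, S u⁆ - T (ρ (S u) v - ρ (S v) u) - S (ρ (T u) v - ρ (T v) u)

theorem oOperatorDefect_add_smul (T S : V →ₗ[R] g) (t : R) (u v : V) :
    oOperatorDefect ρ (T + t • S) u v =
      oOperatorDefect ρ T u v + t • oOperatorCocycleDefect ρ T S u v
        + t ^ 2 • oOperatorDefect ρ S u v := by
  have hskew : ⁅S u, T v⁆ = -⁅T v, S u⁆ := (lie_skew _ _).symm
  simp only [oOperatorDefect, oOperatorCocycleDefect, LinearMap.add_apply,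
    LinearMap.smul_apply, map_add, map_sub, map_smul, add_lie, lie_add, smul_lie, lie_smul, hskew]
  module

end Defect

theorem eq_zero_of_forall_add_smul_add_sq_smul_eq_zero {K M : Type*} [Field K] [CharZero K]
    [AddCommGroup M] [Module K M] {a b c : M} (h : ∀ t : K, a + t • b + t ^ 2 • c = 0) :
    a = 0 ∧ b = 0 ∧ c = 0 := by
  have ha : a = 0 := by simpa using h 0
  subst ha
  have h1 : b + c = 0 := by simpa using h 1
  have h2 : -b + c = 0 := by simpa using h (-1)
  have hc : c = 0 := by
    have h2c : (2 : K) • c = 0 := by linear_combination (norm := module) h1 + h2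
    exact (smul_eq_zero.mp h2c).resolve_left two_ne_zero
  subst hc
  exact ⟨rfl, by simpa using h1, rfl⟩

theorem stmt7_general {K : Type*} [Field K] [CharZero K]
    {g : Type*} [LieRing g] [LieAlgebra K g]
    {V : Type*} [AddCommGroup V] [Module K V]
    (ρ : g →ₗ⁅K⁆ Module.End K V) (T Td : V →ₗ[K] g)
    (hdef : ∀ t : K, ∀ u v : V,
      ⁅(T + t • Td) u, (T + t • Td) v⁆
        = (T + t • Td) (ρ ((T + t • Td) u) v - ρ ((T + t • Td) v) u)) :
    (∀ u v : V, ⁅Td u, Td v⁆ = Td (ρ (Td u) v - ρ (Td v) u)) ∧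
    (∀ u v : V,
      ⁅T u, Td v⁆ - ⁅T v, Td u⁆ - T (ρ (Td u) v - ρ (Td v) u)
        - Td (ρ (T u) v - ρ (T v) u) = 0) := by
  have hcoeff (u v : V) := eq_zero_of_forall_add_smul_add_sq_smul_eq_zero
    (a := oOperatorDefect ρ T u v) (b := oOperatorCocycleDefect ρ T Td u v)
    (c := oOperatorDefect ρ Td u v) fun t => by
      rw [← oOperatorDefect_add_smul, oOperatorDefect, hdef, sub_self]
  exact ⟨fun u v => sub_eq_zero.mp (hcoeff u v).2.2, fun u v => (hcoeff u v).2.1⟩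

/-- If `T + tTd` is an O-operator for every scalar `t`, then `Td` is an
O-operator and a 1-cocycle. -/
theorem stmt7 {K : Type*} [Field K] [CharZero K]
    {g : Type*} [LieRing g] [LieAlgebra K g]
    {V : Type*} [AddCommGroup V] [Module K V]
    (ρ : g →ₗ⁅K⁆ Module.End K V) (T Td : V →ₗ[K] g)
    (hT : ∀ u v : V, ⁅T u, T v⁆ = T (ρ (T u) v - ρ (T v) u))
    (hdef : ∀ t : K, ∀ u v : V,
      ⁅(T + t • Td) u, (T + t • Td) v⁆
        = (T + t • Td) (ρ ((T + t • Td) u) v - ρ ((T + t • Td) v) u)) :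
    (∀ u v : V, ⁅Td u, Td v⁆ = Td (ρ (Td u) v - ρ (Td v) u)) ∧
    (∀ u v : V,
      ⁅T u, Td v⁆ - ⁅T v, Td u⁆ - T (ρ (Td u) v - ρ (Td v) u)
        - Td (ρ (T u) v - ρ (T v) u) = 0) :=
  stmt7_general ρ T Td hdef
end

section
/- Let x ∈ g be a Nijenhuis element associated to an O-operator T : V → g, i.e. [[x,y],[x,z]] = 0 for all y,z ∈ g, ρ([x,y])∘ρ(x) = 0 for all y ∈ g, and [x, [Tu,x] + T(ρ(x)u)] = 0 for all u ∈ V. Then ρ(x) is a Nijenhuis operator on the pre-Lie algebra (V, ·_T), i.e. ρ(x)(u) ·_T ρ(x)(v) = ρ(x)(ρ(x)(u)·_T v + u·_T ρ(x)(v) − ρ(x)(u·_T v)) for all u,v ∈ V, where u·_T v = ρ(Tu)v. -/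
attribute [local instance 100] LieRing.ofAssociativeRing

/-!
Write `a = ρ x`, `A = ρ (T (ρ x u))` and `B = ρ (T u)`. The third Nijenhuis-element condition says
`⁅x, T (ρ x u)⁆ = ⁅x, ⁅x, T u⁆⁆`, hence `⁅a, A⁆ = ⁅a, ⁅a, B⁆⁆`, and the second one says
`⁅a, B⁆ * a = 0`. The Nijenhuis identity is then the identity `A * a = a * (A + B * a - a * B)`,
which holds in any associative ring under these two relations.
-/

theorem lie_eq_lie_lie_of_lie_lie_add_eq_zero {L : Type*} [LieRing L] {x a b : L}
    (h : ⁅x, ⁅a, x⁆ + b⁆ = 0) : ⁅x, b⁆ = ⁅x, ⁅x, a⁆⁆ := by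
  rw [lie_add, ← lie_skew a x, lie_neg, neg_add_eq_zero] at h
  exact h.symm

theorem mul_eq_mul_add_sub_of_lie_eq_lie_lie {R : Type*} [Ring R] {a A B : R}
    (hA : ⁅a, A⁆ = ⁅a, ⁅a, B⁆⁆) (hB : ⁅a, B⁆ * a = 0) :
    A * a = a * (A + B * a - a * B) := by
  rw [Ring.lie_def a ⁅a, B⁆, hB, sub_zero, Ring.lie_def, Ring.lie_def] at hA
  rw [show A * a = a * A - (a * A - A * a) by abel, hA]
  noncomm_ring

theorem stmt9_general {K : Type*} [Field K]
    {g : Type*} [LieRing g] [LieAlgebra K g]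
    {V : Type*} [AddCommGroup V] [Module K V]
    (ρ : g →ₗ⁅K⁆ Module.End K V) (T : V →ₗ[K] g) (x : g)
    (h2 : ∀ y : g, ∀ u : V, ρ ⁅x, y⁆ (ρ x u) = 0)
    (h3 : ∀ u : V, ⁅x, ⁅T u, x⁆ + T (ρ x u)⁆ = 0) :
    ∀ u v : V,
      ρ (T (ρ x u)) (ρ x v)
        = ρ x (ρ (T (ρ x u)) v + ρ (T u) (ρ x v) - ρ x (ρ (T u) v)) := by
  intro u v
  have hA : ⁅ρ x, ρ (T (ρ x u))⁆ = ⁅ρ x, ⁅ρ x, ρ (T u)⁆⁆ := by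
    simp only [← LieHom.map_lie, lie_eq_lie_lie_of_lie_lie_add_eq_zero (h3 u)]
  have hB : ⁅ρ x, ρ (T u)⁆ * ρ x = 0 := by
    ext w
    simpa only [← LieHom.map_lie, Module.End.mul_apply, LinearMap.zero_apply] using h2 (T u) w
  exact LinearMap.congr_fun (mul_eq_mul_add_sub_of_lie_eq_lie_lie hA hB) v

/-- If `x` is a Nijenhuis element associated to an O-operator `T`, then `ρ(x)`
is a Nijenhuis operator on the pre-Lie algebra `(V, ·_T)`. -/
theorem stmt9 {K : Type*} [Field K]
    {g : Type*} [LieRing g] [LieAlgebra K g]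
    {V : Type*} [AddCommGroup V] [Module K V]
    (ρ : g →ₗ⁅K⁆ Module.End K V) (T : V →ₗ[K] g) (x : g)
    (hT : ∀ u v : V, ⁅T u, T v⁆ = T (ρ (T u) v - ρ (T v) u))
    (h1 : ∀ y z : g, ⁅⁅x, y⁆, ⁅x, z⁆⁆ = 0)
    (h2 : ∀ y : g, ∀ u : V, ρ ⁅x, y⁆ (ρ x u) = 0)
    (h3 : ∀ u : V, ⁅x, ⁅T u, x⁆ + T (ρ x u)⁆ = 0) :
    ∀ u v : V,
      ρ (T (ρ x u)) (ρ x v)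
        = ρ x (ρ (T (ρ x u)) v + ρ (T u) (ρ x v) - ρ x (ρ (T u) v)) :=
  stmt9_general ρ T x h2 h3
end

section
/- Let T : V → g be an O-operator on a Lie algebra g with respect to a representation (V;ρ). Then the linear map N_T on the semidirect product Lie algebra g ⋉_ρ V given by N_T(x, u) = (Tu, 0) is a Nijenhuis operator, i.e. [N_T a, N_T b] = N_T([N_T a, b] + [a, N_T b] − N_T[a,b]) for all a,b ∈ g ⊕ V. -/
/-! `N_T` reads only the `V`-component and lands in `g × 0`, so `N_T ∘ N_T = 0` and the right-hand
side is `T` applied to the `V`-component `ρ(Tu)v - ρ(Tv)u` of `[N_T a, b] + [a, N_T b]`, while the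
left-hand side is `([Tu, Tv], 0)`; the O-operator identity equates the two. -/

attribute [local instance 100] LieRing.ofAssociativeRing

/-- The semidirect product bracket on `g × V`. -/
def sdBracket {K : Type*} [Field K] {g : Type*} [LieRing g] [LieAlgebra K g]
    {V : Type*} [AddCommGroup V] [Module K V]
    (ρ : g →ₗ⁅K⁆ Module.End K V) (p q : g × V) : g × V :=
  (⁅p.1, q.1⁆, ρ p.1 q.2 - ρ q.1 p.2)

/-- The operator `N_T(x,u) = (Tu, 0)` on `g × V`. -/
def NT {K : Type*} [Field K] {g : Type*} [LieRing g] [LieAlgebra K g]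
    {V : Type*} [AddCommGroup V] [Module K V]
    (T : V →ₗ[K] g) (p : g × V) : g × V :=
  (T p.2, 0)

section

variable {K : Type*} [Field K] {g : Type*} [LieRing g] [LieAlgebra K g]
  {V : Type*} [AddCommGroup V] [Module K V]
  (ρ : g →ₗ⁅K⁆ Module.End K V) (T : V →ₗ[K] g)

theorem snd_NT (p : g × V) : (NT T p).2 = 0 := rfl

theorem sdBracket_NT_NT (a b : g × V) :
    sdBracket ρ (NT T a) (NT T b) = (⁅T a.2, T b.2⁆, 0) := by
  simp [sdBracket, NT]

theorem snd_sdBracket_NT_add_sdBracket_NT (a b : g × V) :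
    (sdBracket ρ (NT T a) b + sdBracket ρ a (NT T b)).2 = ρ (T a.2) b.2 - ρ (T b.2) a.2 := by
  simp [sdBracket, NT, sub_eq_add_neg]

end

/-- If `T` is an O-operator, then `N_T` is a Nijenhuis operator on the
semidirect product Lie algebra `g ⋉_ρ V`. -/
theorem stmt11 {K : Type*} [Field K]
    {g : Type*} [LieRing g] [LieAlgebra K g]
    {V : Type*} [AddCommGroup V] [Module K V]
    (ρ : g →ₗ⁅K⁆ Module.End K V) (T : V →ₗ[K] g)
    (hT : ∀ u v : V, ⁅T u, T v⁆ = T (ρ (T u) v - ρ (T v) u)) :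
    ∀ a b : g × V,
      sdBracket ρ (NT T a) (NT T b)
        = NT T (sdBracket ρ (NT T a) b + sdBracket ρ a (NT T b)
            - NT T (sdBracket ρ a b)) := by
  intro a b
  have hsnd : (sdBracket ρ (NT T a) b + sdBracket ρ a (NT T b) - NT T (sdBracket ρ a b)).2
      = ρ (T a.2) b.2 - ρ (T b.2) a.2 := by
    rw [Prod.snd_sub, snd_sdBracket_NT_add_sdBracket_NT, snd_NT, sub_zero]
  calc sdBracket ρ (NT T a) (NT T b)
      = (T (ρ (T a.2) b.2 - ρ (T b.2) a.2), 0) := by rw [sdBracket_NT_NT, hT]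
    _ = NT T (sdBracket ρ (NT T a) b + sdBracket ρ a (NT T b) - NT T (sdBracket ρ a b)) := by
      rw [NT, hsnd]
end

section
/- If T : V → g is an O-operator with respect to (V;ρ), then the Lie bracket on V ⊕ g defined by [(x,u),(y,v)]' := ([u,v]_T, ρ̄(u)y − ρ̄(v)x), where [u,v]_T = ρ(Tu)v − ρ(Tv)u and ρ̄(u)(x) = [Tu,x] + T(ρ(x)u), coincides with the Nijenhuis-deformed bracket [·,·]_{N_T} on the semidirect product g ⋉_ρ V and hence is a Lie algebra structure on g ⊕ V. -/
/-!
The bracket `[·,·]'` is the semidirect product bracket of the Lie algebra `(V, [·,·]_T)` with its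
representation `ρ̄` on `g`. Both facts behind this — the Jacobi identity for `[·,·]_T` and
`ρ̄([u,v]_T) = [ρ̄(u), ρ̄(v)]` — follow from the O-operator identity `T [u,v]_T = [Tu, Tv]`
together with `ρ` being a Lie algebra morphism.
-/

attribute [local instance 100] LieRing.ofAssociativeRing

/-- The bracket on `g × V` deformed by the Nijenhuis operator `N_T`. -/
def dBracket {K : Type*} [Field K] {g : Type*} [LieRing g] [LieAlgebra K g]
    {V : Type*} [AddCommGroup V] [Module K V]
    (ρ : g →ₗ⁅K⁆ Module.End K V) (T : V →ₗ[K] g) (a b : g × V) : g × V :=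
  sdBracket ρ (NT T a) b + sdBracket ρ a (NT T b) - NT T (sdBracket ρ a b)

section OOperator

variable {K : Type*} [CommRing K] {g : Type*} [LieRing g] [LieAlgebra K g]
  {V : Type*} [AddCommGroup V] [Module K V]
  (ρ : g →ₗ⁅K⁆ Module.End K V) (T : V →ₗ[K] g)

/-- The paper's `[u,v]_T`. -/
def inducedBracket (u v : V) : V :=
  ρ (T u) v - ρ (T v) u

/-- The paper's `ρ̄(u)`. -/
def inducedRep (u : V) : g →ₗ[K] g where
  toFun x := ⁅T u, x⁆ + T (ρ x u)
  map_add' x y := by simp only [lie_add, map_add, LinearMap.add_apply]; abel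
  map_smul' c x := by
    simp only [lie_smul, map_smul, LinearMap.smul_apply, smul_add, RingHom.id_apply]

variable {ρ T}

theorem inducedBracket_jacobi (hT : ∀ u v : V, ⁅T u, T v⁆ = T (ρ (T u) v - ρ (T v) u))
    (u v w : V) :
    inducedBracket ρ T u (inducedBracket ρ T v w) + inducedBracket ρ T v (inducedBracket ρ T w u)
      + inducedBracket ρ T w (inducedBracket ρ T u v) = 0 := by
  simp only [inducedBracket, ← hT, map_sub, LieHom.map_lie, Ring.lie_def, LinearMap.sub_apply,
    Module.End.mul_apply]
  abel

theorem inducedRep_inducedBracket (hT : ∀ u v : V, ⁅T u, T v⁆ = T (ρ (T u) v - ρ (T v) u))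
    (u v : V) (x : g) :
    inducedRep ρ T (inducedBracket ρ T u v) x
      = inducedRep ρ T u (inducedRep ρ T v x) - inducedRep ρ T v (inducedRep ρ T u x) := by
  simp only [inducedRep, inducedBracket, LinearMap.coe_mk, AddHom.coe_mk, lie_add]
  rw [← hT u v, hT u (ρ x v), hT v (ρ x u)]
  simp only [map_add, map_sub, LieHom.map_lie, Ring.lie_def, LinearMap.add_apply,
    LinearMap.sub_apply, Module.End.mul_apply, lie_lie]
  abel

end OOperator

section Deformation

variable {K : Type*} [Field K] {g : Type*} [LieRing g] [LieAlgebra K g]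
  {V : Type*} [AddCommGroup V] [Module K V]
  (ρ : g →ₗ⁅K⁆ Module.End K V) (T : V →ₗ[K] g)

theorem dBracket_mk (x y : g) (u v : V) :
    dBracket ρ T (x, u) (y, v)
      = (inducedRep ρ T u y - inducedRep ρ T v x, inducedBracket ρ T u v) := by
  simp only [dBracket, sdBracket, NT, inducedRep, inducedBracket, LinearMap.coe_mk,
    AddHom.coe_mk, Prod.mk_add_mk, Prod.mk_sub_mk, map_sub, map_zero, Prod.mk.injEq]
  constructor
  · rw [← lie_skew x (T v)]; abel
  · abel

theorem dBracket_self (a : g × V) : dBracket ρ T a a = 0 := by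
  obtain ⟨x, u⟩ := a
  simp [dBracket_mk, inducedBracket]

variable {ρ T}

theorem dBracket_jacobi (hT : ∀ u v : V, ⁅T u, T v⁆ = T (ρ (T u) v - ρ (T v) u))
    (a b c : g × V) :
    dBracket ρ T a (dBracket ρ T b c) + dBracket ρ T b (dBracket ρ T c a)
      + dBracket ρ T c (dBracket ρ T a b) = 0 := by
  obtain ⟨x, u⟩ := a
  obtain ⟨y, v⟩ := b
  obtain ⟨z, w⟩ := c
  simp only [dBracket_mk, Prod.mk_add_mk, Prod.mk_eq_zero]
  refine ⟨?_, inducedBracket_jacobi hT u v w⟩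
  simp only [map_sub, inducedRep_inducedBracket hT]
  abel

end Deformation

/-- If `T` is an O-operator, the bracket
`[(x,u),(y,v)]' = (ρ̄(u)y − ρ̄(v)x, [u,v]_T)` (with the `g`-component
`ρ̄(u)y − ρ̄(v)x` and `V`-component `[u,v]_T`) coincides with the Nijenhuis
deformed bracket `[·,·]_{N_T}` on `g ⋉_ρ V`, and hence is a Lie algebra
structure on `g ⊕ V`. -/
theorem stmt12 {K : Type*} [Field K]
    {g : Type*} [LieRing g] [LieAlgebra K g]
    {V : Type*} [AddCommGroup V] [Module K V]
    (ρ : g →ₗ⁅K⁆ Module.End K V) (T : V →ₗ[K] g)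
    (hT : ∀ u v : V, ⁅T u, T v⁆ = T (ρ (T u) v - ρ (T v) u)) :
    (∀ (x y : g) (u v : V),
      dBracket ρ T (x, u) (y, v)
        = ((⁅T u, y⁆ + T (ρ y u)) - (⁅T v, x⁆ + T (ρ x v)),
            ρ (T u) v - ρ (T v) u)) ∧
    (∀ a : g × V, dBracket ρ T a a = 0) ∧
    (∀ a b c : g × V,
      dBracket ρ T a (dBracket ρ T b c) + dBracket ρ T b (dBracket ρ T c a)
        + dBracket ρ T c (dBracket ρ T a b) = 0) :=
  ⟨dBracket_mk ρ T, dBracket_self ρ T, dBracket_jacobi hT⟩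
end

section
/- Let R be a Rota-Baxter operator of weight 0 on a Lie algebra g. Then ρ̄(x) := ad_{R(x)} − R∘ad_x defines a representation of the Lie algebra (g, [·,·]_R) on g, where [x,y]_R = [Rx,y] + [x,Ry]. -/
/-- For a Rota-Baxter operator `R` of weight 0, the map
`ρ̄(x) = ad_{Rx} − R ∘ ad_x` is a representation of `(g, [·,·]_R)` on `g`. -/
theorem stmt14 {K : Type*} [Field K]
    {g : Type*} [LieRing g] [LieAlgebra K g]
    (R : g →ₗ[K] g)
    (hR : ∀ x y : g, ⁅R x, R y⁆ = R (⁅R x, y⁆ + ⁅x, R y⁆)) :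
    ∀ x y z : g,
      (⁅R (⁅R x, y⁆ + ⁅x, R y⁆), z⁆ - R ⁅⁅R x, y⁆ + ⁅x, R y⁆, z⁆)
        = (⁅R x, ⁅R y, z⁆ - R ⁅y, z⁆⁆ - R ⁅x, ⁅R y, z⁆ - R ⁅y, z⁆⁆)
          - (⁅R y, ⁅R x, z⁆ - R ⁅x, z⁆⁆ - R ⁅y, ⁅R x, z⁆ - R ⁅x, z⁆⁆) := by
  intro x y z
  rw [← hR x y, lie_lie]
  simp only [hR, lie_lie, lie_sub, sub_lie, add_lie, lie_add, map_add, map_sub]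
  abel
end

section
/- Consider the 2-dimensional complex Lie algebra with basis e₁,e₂ and bracket [e₁,e₂] = e₁. A linear operator R with matrix (a₁₁, a₁₂; a₂₁, a₂₂) (columns giving R(e₁), R(e₂)) is a Rota-Baxter operator of weight 0 if and only if (a₁₁+a₂₂)a₂₁ = 0 and a₁₁a₂₂ − a₁₂a₂₁ = (a₁₁+a₂₂)a₁₁. -/
/-- The bracket of the 2-dimensional non-abelian complex Lie algebra with basis
`e₁ = (1,0)`, `e₂ = (0,1)` and `[e₁,e₂] = e₁`. -/
def br2 (p q : ℂ × ℂ) : ℂ × ℂ :=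
  (p.1 * q.2 - p.2 * q.1, 0)

/-- The linear operator with matrix `(a₁₁, a₁₂; a₂₁, a₂₂)` in the basis `e₁,e₂`. -/
def op2 (a11 a12 a21 a22 : ℂ) (p : ℂ × ℂ) : ℂ × ℂ :=
  (a11 * p.1 + a12 * p.2, a21 * p.1 + a22 * p.2)

/-- On the 2-dimensional non-abelian complex Lie algebra, `R` given by the
matrix `(a₁₁, a₁₂; a₂₁, a₂₂)` is a Rota-Baxter operator of weight 0 iff
`(a₁₁+a₂₂)a₂₁ = 0` and `a₁₁a₂₂ − a₁₂a₂₁ = (a₁₁+a₂₂)a₁₁`. -/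
theorem stmt15 (a11 a12 a21 a22 : ℂ) :
    (∀ x y : ℂ × ℂ,
      br2 (op2 a11 a12 a21 a22 x) (op2 a11 a12 a21 a22 y)
        = op2 a11 a12 a21 a22
            (br2 (op2 a11 a12 a21 a22 x) y + br2 x (op2 a11 a12 a21 a22 y))) ↔
    ((a11 + a22) * a21 = 0 ∧ a11 * a22 - a12 * a21 = (a11 + a22) * a11) := by
  constructor
  · intro h
    have := h (1, 0) (0, 1)
    simp [br2, op2, Prod.ext_iff] at this
    obtain ⟨h1, h2⟩ := this
    refine ⟨?_, by linear_combination h1⟩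
    rcases h2 with h | h
    · rw [h]; ring
    · linear_combination a21 * h
  · rintro ⟨h1, h2⟩ ⟨x1, x2⟩ ⟨y1, y2⟩
    simp only [br2, op2, Prod.mk_add_mk, Prod.mk.injEq]
    constructor
    · linear_combination (x1 * y2 - x2 * y1) * h2
    · linear_combination (x2 * y1 - x1 * y2) * h1
end

section
/- On the 3-dimensional Heisenberg Lie algebra H₃ with basis e₁,e₂,e₃ and [e₁,e₂]=e₃, [e₁,e₃]=[e₂,e₃]=0, a linear operator R with matrix (r_{ij}) is a Rota-Baxter operator of weight 0 if and only if r₁₃ = r₂₃ = 0 and (r₁₁+r₂₂)r₃₃ = r₁₁r₂₂ − r₂₁r₁₂. -/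
/-- The bracket of the complex Heisenberg Lie algebra `H₃` with basis
`e₁ = (1,0,0)`, `e₂ = (0,1,0)`, `e₃ = (0,0,1)` and `[e₁,e₂] = e₃`. -/
def brH (p q : ℂ × ℂ × ℂ) : ℂ × ℂ × ℂ :=
  (0, 0, p.1 * q.2.1 - p.2.1 * q.1)

/-- The linear operator with matrix `(r_{ij})` in the basis `e₁,e₂,e₃`. -/
def opH (r11 r12 r13 r21 r22 r23 r31 r32 r33 : ℂ) (p : ℂ × ℂ × ℂ) : ℂ × ℂ × ℂ :=
  (r11 * p.1 + r12 * p.2.1 + r13 * p.2.2,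
   r21 * p.1 + r22 * p.2.1 + r23 * p.2.2,
   r31 * p.1 + r32 * p.2.1 + r33 * p.2.2)

/-- On the Heisenberg Lie algebra `H₃(ℂ)`, `R` given by the matrix `(r_{ij})`
is a Rota-Baxter operator of weight 0 iff `r₁₃ = r₂₃ = 0` and
`(r₁₁+r₂₂)r₃₃ = r₁₁r₂₂ − r₂₁r₁₂`. -/
theorem stmt16 (r11 r12 r13 r21 r22 r23 r31 r32 r33 : ℂ) :
    (∀ x y : ℂ × ℂ × ℂ,
      brH (opH r11 r12 r13 r21 r22 r23 r31 r32 r33 x)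
          (opH r11 r12 r13 r21 r22 r23 r31 r32 r33 y)
        = opH r11 r12 r13 r21 r22 r23 r31 r32 r33
            (brH (opH r11 r12 r13 r21 r22 r23 r31 r32 r33 x) y
              + brH x (opH r11 r12 r13 r21 r22 r23 r31 r32 r33 y))) ↔
    (r13 = 0 ∧ r23 = 0 ∧ (r11 + r22) * r33 = r11 * r22 - r21 * r12) := by
  constructor
  · intro h
    have h1 := h (0, 0, 1) (0, 1, 0)
    have h2 := h (0, 0, 1) (1, 0, 0)
    have h3 := h (1, 0, 0) (0, 1, 0)
    simp [brH, opH, Prod.ext_iff] at h1 h2 h3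
    refine ⟨h1.1, h2.2.1, ?_⟩
    linear_combination -h3.2.2
  · rintro ⟨h13, h23, h33⟩ x y
    subst h13 h23
    obtain ⟨x1, x2, x3⟩ := x
    obtain ⟨y1, y2, y3⟩ := y
    simp only [brH, opH, Prod.mk_add_mk, Prod.mk.injEq]
    refine ⟨by ring, by ring, ?_⟩
    linear_combination (x2 * y1 - x1 * y2) * h33
end

section
/- Let g be a finite-dimensional Lie algebra and r ∈ g ⊗ g skew-symmetric. Then r satisfies the classical Yang-Baxter equation [r,r] = 0 (with the Schouten bracket) if and only if the induced map r♯ : g* → g, defined by ⟨r♯(ξ), η⟩ = r(ξ,η), is an O-operator with respect to the coadjoint representation, i.e. [r♯ξ, r♯η] = r♯(ad*_{r♯ξ}η − ad*_{r♯η}ξ) for all ξ,η ∈ g*. -/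
/-- The coadjoint action: `(coad x ξ) y = −ξ [x,y]`. -/
def coad (K : Type*) [Field K] {g : Type*} [LieRing g] [LieAlgebra K g]
    (x : g) (ξ : Module.Dual K g) : Module.Dual K g :=
  -(ξ ∘ₗ (LieAlgebra.ad K g x))

/-- For a skew-symmetric `r ∈ Λ²g` (encoded by `r♯ : g* → g` with
`η(r♯ξ) = −ξ(r♯η)`), `r` satisfies the classical Yang-Baxter equation
`[r,r] = 0` iff `r♯` is an O-operator with respect to the coadjoint
representation. -/
theorem stmt17 {K : Type*} [Field K] [CharZero K]
    {g : Type*} [LieRing g] [LieAlgebra K g] [Module.Finite K g]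
    (rs : Module.Dual K g →ₗ[K] g)
    (hskew : ∀ ξ η : Module.Dual K g, η (rs ξ) = - ξ (rs η)) :
    (∀ ξ η θ : Module.Dual K g,
      θ ⁅rs ξ, rs η⁆ + ξ ⁅rs η, rs θ⁆ + η ⁅rs θ, rs ξ⁆ = 0) ↔
    (∀ ξ η : Module.Dual K g,
      ⁅rs ξ, rs η⁆ = rs (coad K (rs ξ) η - coad K (rs η) ξ)) := by
  have key : ∀ ξ η θ : Module.Dual K g,
      θ (rs (coad K (rs ξ) η - coad K (rs η) ξ)) =
      η ⁅rs ξ, rs θ⁆ - ξ ⁅rs η, rs θ⁆ := by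
    intro ξ η θ
    rw [hskew]
    simp [coad, LieAlgebra.ad_apply]
    ring
  constructor
  · intro h ξ η
    rw [← sub_eq_zero, ← Module.forall_dual_apply_eq_zero_iff K]
    intro θ
    have hsk : η ⁅rs θ, rs ξ⁆ + η ⁅rs ξ, rs θ⁆ = 0 := by
      rw [← lie_skew (rs ξ) (rs θ), map_neg]; ring
    rw [map_sub, key]
    linear_combination h ξ η θ - hsk
  · intro h ξ η θ
    have := congrArg θ (h ξ η)
    rw [key] at this
    have hsk : η ⁅rs θ, rs ξ⁆ + η ⁅rs ξ, rs θ⁆ = 0 := by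
      rw [← lie_skew (rs ξ) (rs θ), map_neg]; ring
    linear_combination this + hsk
end
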